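/- Post-detection confidence set for the post-change parameter: let C be any random subset of {1,…,τ}, measurable with respect to the data and auxiliary randomness, such that P_{θ₀,T,θ₁}(T ∈ C | τ ≥ T) ≥ 1 − α for all θ₀ ∈ Θ₀, θ₁ ∈ Θ₁, and T ∈ ℕ with P_{θ₀,∞}(τ ≥ T) > 0, where τ satisfies Assumption 1. Then for every η₁ ∈ (0,1) and every T ∈ ℕ, P_{θ₀,T,θ₁}( θ₁ ∈ ⋃_{t∈C} CS(X_t,…,X_τ; 1 − η₁ r_t*) | τ ≥ T ) ≥ 1 − α − η₁. -/

import Mathlib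

open MeasureTheory ProbabilityTheory Filter Set
open scoped ENNReal NNReal

namespace SeqChange

variable {𝒳 : Type*} [MeasurableSpace 𝒳]

/-- The σ-algebra on the sequence space generated by the coordinates with indices in `s`. -/
def coordSigma (𝒳 : Type*) [MeasurableSpace 𝒳] (s : Set ℕ) : MeasurableSpace (ℕ → 𝒳) :=
  ⨆ i ∈ s, MeasurableSpace.comap (fun ω : ℕ → 𝒳 => ω i) inferInstance

/-- The natural filtration `σ(X₁, …, Xₙ)` of the observation sequence (observations are
indexed from 1; coordinate 0 is unused). -/
def natFilt (𝒳 : Type*) [MeasurableSpace 𝒳] (n : ℕ) : MeasurableSpace (ℕ → 𝒳) :=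
  coordSigma 𝒳 {i | 1 ≤ i ∧ i ≤ n}

/-- `τ` is a stopping time with respect to the natural filtration of the observation
sequence, taking values in `ℕ ∪ {∞}`. -/
def IsStoppingTimeSeq (τ : (ℕ → 𝒳) → ℕ∞) : Prop :=
  ∀ n : ℕ, MeasurableSet[natFilt 𝒳 n] {ω | τ ω ≤ (n : ℕ∞)}

/-- `P` is the joint law of a sequence of independent observations `X₁, X₂, …` with
`Xₙ ~ ν n` for every `n ≥ 1`: a probability measure whose finite-dimensional
distributions on the coordinates with indices `≥ 1` are the corresponding products. -/
def IsProductLaw (P : Measure (ℕ → 𝒳)) (ν : ℕ → Measure 𝒳) : Prop :=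
  IsProbabilityMeasure P ∧
    ∀ s : Finset ℕ, (∀ i ∈ s, 1 ≤ i) → ∀ A : ℕ → Set 𝒳, (∀ i, MeasurableSet (A i)) →
      P {ω | ∀ i ∈ s, ω i ∈ A i} = ∏ i ∈ s, ν i (A i)

/-- `P` is the law `P_{F₀,T,F₁}`: independent coordinates, `Xₙ ~ F₀` for `n < T` and
`Xₙ ~ F₁` for `n ≥ T`. -/
def IsChangeLaw (P : Measure (ℕ → 𝒳)) (F₀ F₁ : Measure 𝒳) (T : ℕ) : Prop :=
  IsProductLaw P (fun n => if n < T then F₀ else F₁)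

/-- `P` is the law `P_{F₀,∞}`: all coordinates i.i.d. `F₀` (no change ever occurs). -/
def IsNoChangeLaw (P : Measure (ℕ → 𝒳)) (F₀ : Measure 𝒳) : Prop :=
  IsProductLaw P (fun _ => F₀)

/-- Under `Q`, the coordinates with indices in `I` are i.i.d. with law `ν`. -/
def IsIIDOn (Q : Measure (ℕ → 𝒳)) (ν : Measure 𝒳) (I : Set ℕ) : Prop :=
  IsProbabilityMeasure Q ∧
    ∀ s : Finset ℕ, (↑s ⊆ I) → ∀ A : ℕ → Set 𝒳, (∀ i, MeasurableSet (A i)) →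
      Q {ω | ∀ i ∈ s, ω i ∈ A i} = ∏ i ∈ s, ν (A i)

/-- Forward filtration `σ(X_t, …, X_n)`. -/
def fwdFilt (𝒳 : Type*) [MeasurableSpace 𝒳] (t n : ℕ) : MeasurableSpace (ℕ → 𝒳) :=
  coordSigma 𝒳 {i | t ≤ i ∧ i ≤ n}

/-- Backward filtration `σ(X_n, …, X_{t-1})`. -/
def bwdFilt (𝒳 : Type*) [MeasurableSpace 𝒳] (t n : ℕ) : MeasurableSpace (ℕ → 𝒳) :=
  coordSigma 𝒳 {i | n ≤ i ∧ i < t}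

/-- A forward `t`-delay e-process under the class `𝒫₁`: a nonnegative process
`(R n)_{n ≥ t}` adapted to the forward filtration `σ(X_t, …, X_n)` such that for every
`F₁ ∈ 𝒫₁`, every law `Q` under which `X_t, X_{t+1}, …` are i.i.d. `F₁`, and every
stopping time `κ ≥ t` of the forward filtration, `E_Q[R_κ] ≤ 1`. -/
def IsForwardEProcess (𝒫₁ : Set (Measure 𝒳)) (t : ℕ) (R : ℕ → (ℕ → 𝒳) → ℝ≥0∞) : Prop :=
  (∀ n, t ≤ n → Measurable[fwdFilt 𝒳 t n] (R n)) ∧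
    ∀ F₁ ∈ 𝒫₁, ∀ Q : Measure (ℕ → 𝒳), IsIIDOn Q F₁ {i | t ≤ i} →
      ∀ κ : (ℕ → 𝒳) → ℕ, (∀ ω, t ≤ κ ω) →
        (∀ n, MeasurableSet[fwdFilt 𝒳 t n] {ω | κ ω ≤ n}) →
        ∫⁻ ω, R (κ ω) ω ∂Q ≤ 1

/-- A backward `t`-delay e-process under the class `𝒫₀`: a nonnegative process
`(S n)_{1 ≤ n < t}` adapted to the backward filtration `σ(X_n, …, X_{t-1})` such that for
every `F₀ ∈ 𝒫₀`, every law `Q` under which `X₁, …, X_{t-1}` are i.i.d. `F₀`, and every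
stopping time `κ` of the backward filtration with `1 ≤ κ < t`, `E_Q[S_κ] ≤ 1`. -/
def IsBackwardEProcess (𝒫₀ : Set (Measure 𝒳)) (t : ℕ) (S : ℕ → (ℕ → 𝒳) → ℝ≥0∞) : Prop :=
  (∀ n, 1 ≤ n → n < t → Measurable[bwdFilt 𝒳 t n] (S n)) ∧
    ∀ F₀ ∈ 𝒫₀, ∀ Q : Measure (ℕ → 𝒳), IsIIDOn Q F₀ {i | 1 ≤ i ∧ i < t} →
      ∀ κ : (ℕ → 𝒳) → ℕ, (∀ ω, 1 ≤ κ ω ∧ κ ω < t) →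
        (∀ n, MeasurableSet[bwdFilt 𝒳 t n] {ω | n ≤ κ ω}) →
        ∫⁻ ω, S (κ ω) ω ∂Q ≤ 1

/-- The localization statistic `M_t` built from the estimator `T̂`, forward e-processes `R`
and backward e-processes `S`: `M_t = R^{(t)}_{T̂ - 1}` if `t < T̂ ≤ τ < ∞`, `M_t = 1` if
`t = T̂ ≤ τ < ∞`, `M_t = S^{(t)}_{T̂}` if `T̂ < t ≤ τ < ∞`, and `M_t = -∞` if `t > τ` or
`τ = ∞`. -/
noncomputable def eStat (τ : (ℕ → 𝒳) → ℕ∞) (That : (ℕ → 𝒳) → ℕ)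
    (R S : ℕ → ℕ → (ℕ → 𝒳) → ℝ≥0∞) (t : ℕ) (ω : ℕ → 𝒳) : EReal :=
  if (t : ℕ∞) ≤ τ ω ∧ τ ω ≠ ⊤ then
    if t < That ω then ((R t (That ω - 1) ω : ℝ≥0∞) : EReal)
    else if t = That ω then 1
    else ((S t (That ω) ω : ℝ≥0∞) : EReal)
  else ⊥

/-- `Quantile(1 − c; v)`: the `⌈(1 − c)·|v|⌉`-th smallest of the values in `v`. -/
noncomputable def quantileStat (c : ℝ) (v : Multiset EReal) : EReal :=
  (v.sort (· ≤ ·)).getD (⌈(1 - c) * (v.card : ℝ)⌉₊ - 1) ⊥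

/-- Membership in the stopped confidence sequence `CS(X_t, …, X_τ; 1 − c)`:
`θ ∈ CS(X_t,…,X_n; 1−c)` whenever `τ = n` (vacuously true when `τ = ∞`). -/
def stoppedCSMem {𝒳 : Type*} [MeasurableSpace 𝒳] {Θ : Type*} (τ : (ℕ → 𝒳) → ℕ∞)
    (CSset : ℝ → ℕ → ℕ → (ℕ → 𝒳) → Set Θ) (c : ℝ) (t : ℕ) (ω : ℕ → 𝒳) (θ : Θ) : Prop :=
  ∀ n : ℕ, t ≤ n → τ ω = (n : ℕ∞) → θ ∈ CSset c t n ω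

/-
The event `{τ ≥ T}` is determined by `X₁, …, X_{T-1}`, so it has the same probability under
`P_{θ₀,T,θ₁}` and `P_{θ₀,∞}`. On it, `T ∈ C` with conditional probability at least `1 - α`,
and when `T ∈ C` the parameter `θ₁` is covered unless the confidence sequence started at `T`
fails. Given the auxiliary randomness that failure has probability at most `η₁ r_T*`, hence
unconditionally at most `η₁ E[r_T*] = η₁ P_{θ₀*,∞}(τ ≥ T) ≤ η₁ P_{θ₀,∞}(τ ≥ T)` by
Assumption 1; after conditioning on `{τ ≥ T}` it costs at most `η₁`.
-/

lemma coordSigma_le (s : Set ℕ) :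
    coordSigma 𝒳 s ≤ (inferInstance : MeasurableSpace (ℕ → 𝒳)) :=
  iSup₂_le fun i _ => (measurable_pi_apply i).comap_le

def coordCylinders (𝒳 : Type*) [MeasurableSpace 𝒳] (s : Set ℕ) : Set (Set (ℕ → 𝒳)) :=
  {B | ∃ (t : Finset ℕ) (A : ℕ → Set 𝒳), ↑t ⊆ s ∧ (∀ i, MeasurableSet (A i)) ∧
    B = (t : Set ℕ).pi A}

lemma isPiSystem_coordCylinders (s : Set ℕ) : IsPiSystem (coordCylinders 𝒳 s) := by
  classical
  rintro _ ⟨t₁, A₁, ht₁, hA₁, rfl⟩ _ ⟨t₂, A₂, ht₂, hA₂, rfl⟩ -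
  set A₁' := t₁.piecewise A₁ fun _ => univ
  set A₂' := t₂.piecewise A₂ fun _ => univ
  refine ⟨t₁ ∪ t₂, fun i => A₁' i ∩ A₂' i, by simpa using union_subset ht₁ ht₂,
    fun i => (t₁.piecewise_cases A₁ _ MeasurableSet (hA₁ i) MeasurableSet.univ).inter
      (t₂.piecewise_cases A₂ _ MeasurableSet (hA₂ i) MeasurableSet.univ), ?_⟩
  rw [Finset.coe_union, union_pi_inter (fun i hi => t₁.piecewise_eq_of_notMem _ _ hi)
      (fun i hi => t₂.piecewise_eq_of_notMem _ _ hi),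
    Set.pi_congr rfl fun i hi => (t₁.piecewise_eq_of_mem A₁ (fun _ => univ) hi).symm,
    Set.pi_congr rfl fun i hi => (t₂.piecewise_eq_of_mem A₂ (fun _ => univ) hi).symm]

lemma coordSigma_eq_generateFrom_coordCylinders (s : Set ℕ) :
    coordSigma 𝒳 s = MeasurableSpace.generateFrom (coordCylinders 𝒳 s) := by
  refine le_antisymm (iSup₂_le fun i hi => ?_) (MeasurableSpace.generateFrom_le ?_)
  · rintro _ ⟨A, hA, rfl⟩
    exact MeasurableSpace.measurableSet_generateFrom
      ⟨{i}, fun _ => A, by simpa using hi, fun _ => hA, by ext; simp⟩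
  · rintro _ ⟨t, A, hts, hA, rfl⟩
    rw [Set.pi_def]
    exact MeasurableSet.biInter t.countable_toSet fun i hi =>
      le_iSup₂ (f := fun i (_ : i ∈ s) =>
        MeasurableSpace.comap (fun ω : ℕ → 𝒳 => ω i) inferInstance) i (hts hi) _
        ⟨A i, hA i, rfl⟩

lemma IsProductLaw.measure_eq_of_measurableSet_coordSigma {P P' : Measure (ℕ → 𝒳)}
    {ν ν' : ℕ → Measure 𝒳} {s : Set ℕ} (hP : IsProductLaw P ν) (hP' : IsProductLaw P' ν')
    (hs : ∀ i ∈ s, 1 ≤ i) (hνν' : EqOn ν ν' s) {B : Set (ℕ → 𝒳)}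
    (hB : MeasurableSet[coordSigma 𝒳 s] B) : P B = P' B := by
  have := hP.1
  have := hP'.1
  refine ext_on_measurableSpace_of_generate_finite _ _ ?_ (coordSigma_le s)
    (coordSigma_eq_generateFrom_coordCylinders s) (isPiSystem_coordCylinders s) (by simp) hB
  rintro _ ⟨t, A, hts, hA, rfl⟩
  have ht : ∀ i ∈ t, 1 ≤ i := fun i hi => hs i (hts hi)
  exact (hP.2 t ht A hA).trans <| (Finset.prod_congr rfl fun i hi => by rw [hνν' (hts hi)]).trans
    (hP'.2 t ht A hA).symm

lemma IsStoppingTimeSeq.measurableSet_le {τ : (ℕ → 𝒳) → ℕ∞} (hτ : IsStoppingTimeSeq τ)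
    {T : ℕ} (hT : 1 ≤ T) : MeasurableSet[natFilt 𝒳 (T - 1)] {ω | (T : ℕ∞) ≤ τ ω} := by
  obtain ⟨n, rfl⟩ : ∃ n, T = n + 1 := ⟨T - 1, by omega⟩
  have h : {ω | ((n + 1 : ℕ) : ℕ∞) ≤ τ ω} = {ω | τ ω ≤ n}ᶜ := by
    ext ω
    simp [ENat.add_one_le_iff (ENat.natCast_ne_top n)]
  rw [h, Nat.add_sub_cancel]
  exact (hτ n).compl

lemma IsChangeLaw.measure_le_stoppingTime_eq {τ : (ℕ → 𝒳) → ℕ∞} (hτ : IsStoppingTimeSeq τ)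
    {P P₀ : Measure (ℕ → 𝒳)} {F₀ F₁ : Measure 𝒳} {T : ℕ} (hP : IsChangeLaw P F₀ F₁ T)
    (hP₀ : IsNoChangeLaw P₀ F₀) (hT : 1 ≤ T) :
    P {ω | (T : ℕ∞) ≤ τ ω} = P₀ {ω | (T : ℕ∞) ≤ τ ω} :=
  IsProductLaw.measure_eq_of_measurableSet_coordSigma hP hP₀ (fun _ hi => hi.1)
    (fun i hi => if_pos (by have := hi.2; omega)) (hτ.measurableSet_le hT)

section Probability

variable {Ω Ω' : Type*} [MeasurableSpace Ω] [MeasurableSpace Ω']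

lemma measure_compl_le_ofReal_of_coverage {P : Measure Ω} [IsProbabilityMeasure P] {E : Set Ω}
    (hE : MeasurableSet E) {c : ℝ} (hcov : c < 1 → ENNReal.ofReal (1 - c) ≤ P E) :
    P Eᶜ ≤ ENNReal.ofReal c := by
  rcases lt_or_ge c 1 with hc | hc
  · rw [prob_compl_eq_one_sub hE, tsub_le_iff_right]
    calc 1 = ENNReal.ofReal (c + (1 - c)) := by simp
      _ ≤ ENNReal.ofReal c + ENNReal.ofReal (1 - c) := ENNReal.ofReal_add_le
      _ ≤ ENNReal.ofReal c + P E := by gcongr; exact hcov hc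
  · exact prob_le_one.trans (ENNReal.one_le_ofReal.2 hc)

lemma measure_prod_le_ofReal_integral {P : Measure Ω} {μ : Measure Ω'} [SFinite P] [SFinite μ]
    {S : Set (Ω × Ω')} (hS : MeasurableSet S) {f : Ω' → ℝ} (hf : Integrable f μ)
    (hf₀ : 0 ≤ᵐ[μ] f) (hslice : ∀ᵐ a ∂μ, P ((·, a) ⁻¹' S) ≤ ENNReal.ofReal (f a)) :
    P.prod μ S ≤ ENNReal.ofReal (∫ a, f a ∂μ) := by
  rw [Measure.prod_apply_symm hS, ofReal_integral_eq_lintegral_ofReal hf hf₀]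
  exact lintegral_mono_ae hslice

lemma cond_le_cond_add_of_inter_subset_union {μ : Measure Ω} {A B D N : Set Ω}
    (hA : MeasurableSet A) (hA₀ : μ A ≠ 0) (hA_top : μ A ≠ ⊤) (hsub : A ∩ B ⊆ D ∪ N)
    {ε : ℝ≥0∞} (hN : μ N ≤ ε * μ A) : μ[B|A] ≤ μ[D|A] + ε := by
  have hB : μ (A ∩ B) ≤ μ (A ∩ D) + ε * μ A :=
    calc μ (A ∩ B) ≤ μ (A ∩ D ∪ N) :=
          measure_mono fun ω hω => (hsub hω).imp (fun hD => ⟨hω.1, hD⟩) id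
      _ ≤ μ (A ∩ D) + μ N := measure_union_le _ _
      _ ≤ μ (A ∩ D) + ε * μ A := by gcongr
  rw [cond_apply hA, cond_apply hA]
  calc (μ A)⁻¹ * μ (A ∩ B) ≤ (μ A)⁻¹ * (μ (A ∩ D) + ε * μ A) := by gcongr
    _ = (μ A)⁻¹ * μ (A ∩ D) + ε := by
      rw [mul_add, mul_comm ε, ← mul_assoc, ENNReal.inv_mul_cancel hA₀ hA_top, one_mul]

lemma measure_prod_compl_le_integral_of_coverage {P : Measure Ω} [IsProbabilityMeasure P]
    {μ : Measure Ω'} [SFinite μ] {E : ℝ → Set Ω} {ℓ : Ω' → ℝ}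
    (hE : MeasurableSet {q : Ω × Ω' | q.1 ∈ E (ℓ q.2)}) (hℓ : Integrable ℓ μ)
    (hℓ₀ : ∀ᵐ a ∂μ, 0 < ℓ a) (hcov : ∀ c ∈ Ioo (0 : ℝ) 1, ENNReal.ofReal (1 - c) ≤ P (E c)) :
    P.prod μ {q : Ω × Ω' | q.1 ∈ E (ℓ q.2)}ᶜ ≤ ENNReal.ofReal (∫ a, ℓ a ∂μ) :=
  measure_prod_le_ofReal_integral hE.compl hℓ (hℓ₀.mono fun _ ha => ha.le) <| hℓ₀.mono fun _ ha =>
    measure_compl_le_ofReal_of_coverage (hE.preimage measurable_prodMk_right) fun hc =>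
      hcov _ ⟨ha, hc⟩

end Probability

theorem postchange_parameter_confidence_general
    {𝒳 : Type*} [MeasurableSpace 𝒳] {Θ : Type*}
    (Θ₀ Θ₁ : Set Θ) (F : Θ → Measure 𝒳)
    (τ : (ℕ → 𝒳) → ℕ∞) (hτ : IsStoppingTimeSeq τ)
    (Pinfs : Measure (ℕ → 𝒳))
    (hass1 : ∀ θ ∈ Θ₀, ∀ t : ℕ, ∀ Pinf' : Measure (ℕ → 𝒳), IsNoChangeLaw Pinf' (F θ) →
      Pinfs {ω | (t : ℕ∞) ≤ τ ω} ≤ Pinf' {ω | (t : ℕ∞) ≤ τ ω})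
    -- the auxiliary randomization carrying the estimators `r_t*`
    {Ωr : Type*} [MeasurableSpace Ωr] (μr : Measure Ωr) [IsProbabilityMeasure μr]
    (r : ℕ → Ωr → ℝ) (hrmeas : ∀ t, Measurable (r t))
    (hrpos : ∀ t, ∀ᵐ a ∂μr, 0 < r t a) (hrint : ∀ t, Integrable (r t) μr)
    (hrunb : ∀ t : ℕ, ∫ a, r t a ∂μr = (Pinfs {ω | (t : ℕ∞) ≤ τ ω}).toReal)
    (α : ℝ)
    -- the confidence set `C ⊆ {1,…,τ}` for the changepoint
    (C : (ℕ → 𝒳) × Ωr → Set ℕ)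
    (hCcov : ∀ θ₀ ∈ Θ₀, ∀ θ₁ ∈ Θ₁, ∀ T : ℕ, 1 ≤ T →
      ∀ P Pinf₀ : Measure (ℕ → 𝒳), IsChangeLaw P (F θ₀) (F θ₁) T →
        IsNoChangeLaw Pinf₀ (F θ₀) → Pinf₀ {ω | (T : ℕ∞) ≤ τ ω} ≠ 0 →
        ENNReal.ofReal (1 - α) ≤
          ProbabilityTheory.cond (P.prod μr) {q | (T : ℕ∞) ≤ τ q.1} {q | T ∈ C q})
    -- the confidence sequence procedure for the post-change parameter
    (CSset : ℝ → ℕ → ℕ → (ℕ → 𝒳) → Set Θ)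
    (hCSmeas : ∀ (t n : ℕ) (θ : Θ),
      MeasurableSet {q : (ℕ → 𝒳) × ℝ | θ ∈ CSset q.2 t n q.1})
    (hCS : ∀ c : ℝ, c ∈ Set.Ioo (0 : ℝ) 1 → ∀ t : ℕ, 1 ≤ t → ∀ θ₀ ∈ Θ₀, ∀ θ₁ ∈ Θ₁,
      ∀ P : Measure (ℕ → 𝒳), IsChangeLaw P (F θ₀) (F θ₁) t →
        ENNReal.ofReal (1 - c) ≤ P {ω | ∀ n : ℕ, t ≤ n → θ₁ ∈ CSset c t n ω})
    (η₁ : ℝ) (hη₁ : η₁ ∈ Set.Ioo (0 : ℝ) 1)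
    (θ₀ : Θ) (hθ₀ : θ₀ ∈ Θ₀) (θ₁ : Θ) (hθ₁ : θ₁ ∈ Θ₁)
    (T : ℕ) (hT : 1 ≤ T)
    (P Pinf₀ : Measure (ℕ → 𝒳)) (hP : IsChangeLaw P (F θ₀) (F θ₁) T)
    (hPinf₀ : IsNoChangeLaw Pinf₀ (F θ₀))
    (hpos : Pinf₀ {ω | (T : ℕ∞) ≤ τ ω} ≠ 0) :
    ENNReal.ofReal (1 - α - η₁) ≤
      ProbabilityTheory.cond (P.prod μr) {q : (ℕ → 𝒳) × Ωr | (T : ℕ∞) ≤ τ q.1}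
        {q : (ℕ → 𝒳) × Ωr |
          θ₁ ∈ ⋃ t ∈ C q, {θ : Θ | stoppedCSMem τ CSset (η₁ * r t q.2) t q.1 θ}} := by
  have := hP.1
  have := hPinf₀.1
  set A := {ω : ℕ → 𝒳 | (T : ℕ∞) ≤ τ ω}
  have hA : MeasurableSet A := coordSigma_le _ _ (hτ.measurableSet_le hT)
  have hPA : P A = Pinf₀ A := IsChangeLaw.measure_le_stoppingTime_eq hτ hP hPinf₀ hT
  have hQA : P.prod μr (Prod.fst ⁻¹' A) = P A := by
    rw [← prod_univ, Measure.prod_prod, measure_univ, mul_one]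
  set G := {q : (ℕ → 𝒳) × Ωr | ∀ n, T ≤ n → θ₁ ∈ CSset (η₁ * r T q.2) T n q.1}
  have hG : MeasurableSet G := by
    have hlevel : Measurable fun q : (ℕ → 𝒳) × Ωr => (q.1, η₁ * r T q.2) :=
      measurable_fst.prodMk (((hrmeas T).comp measurable_snd).const_mul η₁)
    simp only [G, ofPred_forall]
    exact .iInter fun n => .iInter fun _ => hlevel (hCSmeas T n θ₁)
  have hGc : P.prod μr Gᶜ ≤ ENNReal.ofReal η₁ * P.prod μr (Prod.fst ⁻¹' A) := by
    have hPinfs : Pinfs A ≤ Pinf₀ A := hass1 θ₀ hθ₀ T Pinf₀ hPinf₀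
    calc P.prod μr Gᶜ ≤ ENNReal.ofReal (∫ a, η₁ * r T a ∂μr) :=
          measure_prod_compl_le_integral_of_coverage
            (E := fun c => {ω | ∀ n, T ≤ n → θ₁ ∈ CSset c T n ω}) hG ((hrint T).const_mul η₁)
            ((hrpos T).mono fun a ha => mul_pos hη₁.1 ha)
            fun c hc => hCS c hc T hT θ₀ hθ₀ θ₁ hθ₁ P hP
      _ = ENNReal.ofReal η₁ * Pinfs A := by
          rw [integral_const_mul, hrunb, ENNReal.ofReal_mul hη₁.1.le,
            ENNReal.ofReal_toReal (ne_top_of_le_ne_top (measure_ne_top _ _) hPinfs)]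
      _ ≤ ENNReal.ofReal η₁ * P.prod μr (Prod.fst ⁻¹' A) := by
          rw [hQA, hPA]
          gcongr ENNReal.ofReal η₁ * ?_
  have hsub : Prod.fst ⁻¹' A ∩ {q | T ∈ C q} ⊆ {q : (ℕ → 𝒳) × Ωr |
      θ₁ ∈ ⋃ t ∈ C q, {θ : Θ | stoppedCSMem τ CSset (η₁ * r t q.2) t q.1 θ}} ∪ Gᶜ :=
    fun q ⟨_, hTC⟩ => (em (q ∈ G)).imp (fun hq => mem_iUnion₂.2 ⟨T, hTC, fun n hn _ => hq n hn⟩) id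
  have hcov := (hCcov θ₀ hθ₀ θ₁ hθ₁ T hT P Pinf₀ hP hPinf₀ hpos).trans
    (cond_le_cond_add_of_inter_subset_union (hA.preimage measurable_fst) (by rwa [hQA, hPA])
      (measure_ne_top _ _) hsub hGc)
  rw [ENNReal.ofReal_sub _ hη₁.1.le]
  exact tsub_le_iff_right.2 hcov

/-- Post-detection confidence set for the post-change parameter: if `C`
is any random subset of `{1,…,τ}` with conditional coverage
`P_{θ₀,T,θ₁}(T ∈ C | τ ≥ T) ≥ 1 − α` (for all `θ₀ ∈ Θ₀`, `θ₁ ∈ Θ₁`, `T` with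
`P_{θ₀,∞}(τ ≥ T) > 0`), where `τ` satisfies Assumption 1, then for every `η₁ ∈ (0,1)`
and every `T`,
`P_{θ₀,T,θ₁}(θ₁ ∈ ⋃_{t∈C} CS(X_t,…,X_τ; 1 − η₁ r_t*) | τ ≥ T) ≥ 1 − α − η₁`. -/
theorem postchange_parameter_confidence
    {𝒳 : Type*} [MeasurableSpace 𝒳] {Θ : Type*}
    (Θ₀ Θ₁ : Set Θ) (hdisj : Disjoint Θ₀ Θ₁) (F : Θ → Measure 𝒳)
    (τ : (ℕ → 𝒳) → ℕ∞) (hτ : IsStoppingTimeSeq τ)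
    -- Assumption 1: least favorable pre-change parameter θ₀*
    (θ₀s : Θ) (hθ₀s : θ₀s ∈ Θ₀)
    (Pinfs : Measure (ℕ → 𝒳)) (hPinfs : IsNoChangeLaw Pinfs (F θ₀s))
    (hass1 : ∀ θ ∈ Θ₀, ∀ t : ℕ, ∀ Pinf' : Measure (ℕ → 𝒳), IsNoChangeLaw Pinf' (F θ) →
      Pinfs {ω | (t : ℕ∞) ≤ τ ω} ≤ Pinf' {ω | (t : ℕ∞) ≤ τ ω})
    -- the auxiliary randomization carrying the estimators `r_t*`
    {Ωr : Type*} [MeasurableSpace Ωr] (μr : Measure Ωr) [IsProbabilityMeasure μr]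
    (r : ℕ → Ωr → ℝ) (hrmeas : ∀ t, Measurable (r t))
    (hrpos : ∀ t, ∀ᵐ a ∂μr, 0 < r t a) (hrint : ∀ t, Integrable (r t) μr)
    (hrunb : ∀ t : ℕ, ∫ a, r t a ∂μr = (Pinfs {ω | (t : ℕ∞) ≤ τ ω}).toReal)
    (α : ℝ) (hα : α ∈ Set.Ioo (0 : ℝ) 1)
    -- the confidence set `C ⊆ {1,…,τ}` for the changepoint
    (C : (ℕ → 𝒳) × Ωr → Set ℕ)
    (hCmeas : ∀ t : ℕ, MeasurableSet {q : (ℕ → 𝒳) × Ωr | t ∈ C q})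
    (hCsub : ∀ q, ∀ t ∈ C q, 1 ≤ t ∧ (t : ℕ∞) ≤ τ q.1)
    (hCcov : ∀ θ₀ ∈ Θ₀, ∀ θ₁ ∈ Θ₁, ∀ T : ℕ, 1 ≤ T →
      ∀ P Pinf₀ : Measure (ℕ → 𝒳), IsChangeLaw P (F θ₀) (F θ₁) T →
        IsNoChangeLaw Pinf₀ (F θ₀) → Pinf₀ {ω | (T : ℕ∞) ≤ τ ω} ≠ 0 →
        ENNReal.ofReal (1 - α) ≤
          ProbabilityTheory.cond (P.prod μr) {q | (T : ℕ∞) ≤ τ q.1} {q | T ∈ C q})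
    -- the confidence sequence procedure for the post-change parameter
    (CSset : ℝ → ℕ → ℕ → (ℕ → 𝒳) → Set Θ)
    (hCSmeas : ∀ (t n : ℕ) (θ : Θ),
      MeasurableSet {q : (ℕ → 𝒳) × ℝ | θ ∈ CSset q.2 t n q.1})
    (hCS : ∀ c : ℝ, c ∈ Set.Ioo (0 : ℝ) 1 → ∀ t : ℕ, 1 ≤ t → ∀ θ₀ ∈ Θ₀, ∀ θ₁ ∈ Θ₁,
      ∀ P : Measure (ℕ → 𝒳), IsChangeLaw P (F θ₀) (F θ₁) t →
        ENNReal.ofReal (1 - c) ≤ P {ω | ∀ n : ℕ, t ≤ n → θ₁ ∈ CSset c t n ω})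
    (η₁ : ℝ) (hη₁ : η₁ ∈ Set.Ioo (0 : ℝ) 1)
    (θ₀ : Θ) (hθ₀ : θ₀ ∈ Θ₀) (θ₁ : Θ) (hθ₁ : θ₁ ∈ Θ₁)
    (T : ℕ) (hT : 1 ≤ T)
    (P Pinf₀ : Measure (ℕ → 𝒳)) (hP : IsChangeLaw P (F θ₀) (F θ₁) T)
    (hPinf₀ : IsNoChangeLaw Pinf₀ (F θ₀))
    (hpos : Pinf₀ {ω | (T : ℕ∞) ≤ τ ω} ≠ 0) :
    ENNReal.ofReal (1 - α - η₁) ≤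
      ProbabilityTheory.cond (P.prod μr) {q : (ℕ → 𝒳) × Ωr | (T : ℕ∞) ≤ τ q.1}
        {q : (ℕ → 𝒳) × Ωr |
          θ₁ ∈ ⋃ t ∈ C q, {θ : Θ | stoppedCSMem τ CSset (η₁ * r t q.2) t q.1 θ}} :=
  postchange_parameter_confidence_general Θ₀ Θ₁ F τ hτ Pinfs hass1 μr r hrmeas hrpos hrint hrunb α C
    hCcov CSset hCSmeas hCS η₁ hη₁ θ₀ hθ₀ θ₁ hθ₁ T hT P Pinf₀ hP hPinf₀ hpos

end SeqChange
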